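/- arXiv:2605.30840 — 2 statements merged into one kernel-verified Lean document; each statement's English description precedes it below -/
import Mathlib

section
/- Let n ≥ 3 be an integer and p an odd prime with p > n. Let J be the n×n matrix over ZMod p with J·e_i = e_{i+1} for 1 ≤ i < n and J·e_n = 0. Set P = 1 + J and Q = 1 + J + J², viewed as elements of the general linear group GL_n(ZMod p) (both are unipotent, hence invertible). Then the cyclic subgroups generated by P and by Q intersect trivially: Subgroup.zpowers P ⊓ Subgroup.zpowers Q = ⊥. -/
open Matrix

/-- The `n × n` nilpotent Jordan block over a ring `R`: `J e_i = e_{i+1}` for `i < n`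
and `J e_n = 0`, i.e. the matrix with ones on the subdiagonal and zeros elsewhere. -/
def jordanJ (n : ℕ) (R : Type) [Ring R] : Matrix (Fin n) (Fin n) R :=
  Matrix.of fun i j => if (i : ℕ) = (j : ℕ) + 1 then 1 else 0

/-!
A common element is `P ^ s = Q ^ t` with `s t : ℕ`. The `(k, 0)` entry of a polynomial `f(J)`
is the `k`-th coefficient of `f`, so `(1 + X) ^ s` and `(1 + X + X ^ 2) ^ t` agree in degrees
`1` and `2`. This gives `s = t` and `s (s - 1) = t (t - 1) + 2 t`, hence `2 s = 0` in `ZMod p`;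
as `p` is odd, `p ∣ s`, and `P ^ p = (1 + J) ^ p = 1 + J ^ p = 1` in characteristic `p`.
-/

open Polynomial

namespace Polynomial

variable {R : Type*} [CommRing R] {f : R[X]}

lemma coeff_zero_pow_of_coeff_zero_eq_one (hf : f.coeff 0 = 1) (t : ℕ) :
    (f ^ t).coeff 0 = 1 := by
  rw [coeff_zero_eq_eval_zero, eval_pow, ← coeff_zero_eq_eval_zero, hf, one_pow]

lemma coeff_one_pow_of_coeff_zero_eq_one (hf : f.coeff 0 = 1) (t : ℕ) :
    (f ^ t).coeff 1 = t * f.coeff 1 := by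
  induction t with
  | zero => simp [coeff_one]
  | succ t ih =>
    rw [pow_succ, coeff_mul, Finset.Nat.sum_antidiagonal_succ]
    simp only [Finset.HasAntidiagonal.antidiagonal_zero, Finset.sum_singleton, zero_add, ih, hf,
      coeff_zero_pow_of_coeff_zero_eq_one hf, one_mul, mul_one, Nat.cast_add, Nat.cast_one]
    ring

lemma two_mul_coeff_two_pow_of_coeff_zero_eq_one (hf : f.coeff 0 = 1) (t : ℕ) :
    2 * (f ^ t).coeff 2 = t * (t - 1) * f.coeff 1 ^ 2 + 2 * t * f.coeff 2 := by
  induction t with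
  | zero => simp [coeff_one]
  | succ t ih =>
    rw [pow_succ, coeff_mul, Finset.Nat.sum_antidiagonal_succ, Finset.Nat.sum_antidiagonal_succ]
    simp only [Finset.HasAntidiagonal.antidiagonal_zero, Finset.sum_singleton, zero_add,
      Nat.reduceAdd, hf, coeff_zero_pow_of_coeff_zero_eq_one hf,
      coeff_one_pow_of_coeff_zero_eq_one hf, one_mul, mul_one, Nat.cast_add, Nat.cast_one,
      add_sub_cancel_right]
    linear_combination ih

end Polynomial

section JordanBlock

variable {n : ℕ} {R : Type}

lemma jordanJ_pow_apply [Ring R] (m : ℕ) (i j : Fin n) :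
    (jordanJ n R ^ m) i j = if (i : ℕ) = j + m then 1 else 0 := by
  induction m generalizing i with
  | zero => simp [Matrix.one_apply, Fin.ext_iff]
  | succ m ih =>
    simp only [pow_succ', Matrix.mul_apply, ih]
    simp only [jordanJ, of_apply, ite_mul, one_mul, zero_mul]
    rcases Nat.eq_zero_or_pos (i : ℕ) with hi | hi
    · simp [hi]
    · rw [Finset.sum_eq_single ⟨i - 1, by omega⟩
        (fun k _ hk => by simp [Fin.ext_iff] at hk ⊢; omega) (by simp), if_pos (by simp; omega)]
      exact if_congr (by simp; omega) rfl rfl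

lemma jordanJ_pow_eq_zero [Ring R] {m : ℕ} (hm : n ≤ m) : jordanJ n R ^ m = 0 := by
  ext i j
  rw [jordanJ_pow_apply, if_neg (by omega), Matrix.zero_apply]

lemma aeval_jordanJ_apply_of_le [CommRing R] (f : R[X]) {i j : Fin n} (hij : j ≤ i) :
    aeval (jordanJ n R) f i j = f.coeff (i - j) := by
  rw [aeval_eq_sum_range, Matrix.sum_apply]
  simp only [Matrix.smul_apply, jordanJ_pow_apply, smul_eq_mul, mul_ite, mul_one, mul_zero]
  have hdiff : ∀ k, (i : ℕ) = j + k ↔ i - j = k := fun k => by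
    rw [Fin.le_iff_val_le_val] at hij; omega
  simp only [hdiff, Finset.sum_ite_eq, Finset.mem_range]
  split_ifs with h
  · rfl
  · exact (coeff_eq_zero_of_natDegree_lt (by omega)).symm

lemma coeff_eq_of_aeval_jordanJ_eq [CommRing R] {f g : R[X]}
    (h : aeval (jordanJ n R) f = aeval (jordanJ n R) g) {k : ℕ} (hk : k < n) :
    f.coeff k = g.coeff k := by
  have := congrFun₂ h ⟨k, hk⟩ ⟨0, by omega⟩
  rwa [aeval_jordanJ_apply_of_le _ (Nat.zero_le k), aeval_jordanJ_apply_of_le _ (Nat.zero_le k)]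
    at this

lemma two_mul_eq_zero_of_one_add_jordanJ_pow_eq [CommRing R] (hn : 3 ≤ n) {s t : ℕ}
    (h : (1 + jordanJ n R) ^ s = (1 + jordanJ n R + jordanJ n R ^ 2) ^ t) : 2 * (s : R) = 0 := by
  have h' : aeval (jordanJ n R) ((1 + X : R[X]) ^ s) =
      aeval (jordanJ n R) ((1 + X + X ^ 2 : R[X]) ^ t) := by
    simpa only [map_pow, map_add, map_one, aeval_X] using h
  have hst := coeff_eq_of_aeval_jordanJ_eq h' (k := 1) (by omega)
  have h2 := congrArg (2 * ·) (coeff_eq_of_aeval_jordanJ_eq h' (k := 2) (by omega))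
  rw [coeff_one_pow_of_coeff_zero_eq_one (by simp), coeff_one_pow_of_coeff_zero_eq_one (by simp)]
    at hst
  rw [two_mul_coeff_two_pow_of_coeff_zero_eq_one (by simp),
    two_mul_coeff_two_pow_of_coeff_zero_eq_one (by simp)] at h2
  simp only [coeff_add, coeff_one, coeff_X, coeff_X_pow, one_ne_zero, OfNat.one_ne_ofNat,
    OfNat.ofNat_ne_zero, ↓reduceIte, zero_add, add_zero, mul_one, mul_zero, one_pow] at hst h2
  linear_combination -h2 + (s + t + 1 : R) * hst

end JordanBlock

lemma one_add_pow_char_eq_one {A : Type*} [Ring A] (p : ℕ) [Fact p.Prime] [CharP A p] {N : A}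
    (hN : N ^ p = 0) : (1 + N) ^ p = 1 := by
  rw [add_pow_char_of_commute p (Commute.one_left N), one_pow, hN, add_zero]

/-- For `n ≥ 3` and an odd prime `p > n`, the cyclic subgroups of `GL n (ZMod p)`
generated by `P = 1 + J` and `Q = 1 + J + J²` intersect trivially. -/
theorem zpowers_inter_zpowers_eq_bot (n p : ℕ) (hn : 3 ≤ n) (hp : p.Prime) (hodd : Odd p)
    (hpn : n < p) (P Q : GL (Fin n) (ZMod p))
    (hP : (P : Matrix (Fin n) (Fin n) (ZMod p)) = 1 + jordanJ n (ZMod p))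
    (hQ : (Q : Matrix (Fin n) (Fin n) (ZMod p)) =
      1 + jordanJ n (ZMod p) + jordanJ n (ZMod p) ^ 2) :
    Subgroup.zpowers P ⊓ Subgroup.zpowers Q = ⊥ := by
  have := Fact.mk hp
  -- `Matrix.charP` needs a nonempty index type
  have : NeZero n := ⟨by omega⟩
  have hPp : P ^ p = 1 := Units.ext <| by
    rw [Units.val_pow_eq_pow_val, hP, Units.val_one]
    exact one_add_pow_char_eq_one p (jordanJ_pow_eq_zero hpn.le)
  rw [Subgroup.eq_bot_iff_forall]
  rintro x ⟨hxP, hxQ⟩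
  obtain ⟨s, rfl : P ^ s = x⟩ := (isOfFinOrder_of_finite P).mem_powers_iff_mem_zpowers.mpr hxP
  obtain ⟨t, hts : Q ^ t = P ^ s⟩ := (isOfFinOrder_of_finite Q).mem_powers_iff_mem_zpowers.mpr hxQ
  have h2s : 2 * (s : ZMod p) = 0 := two_mul_eq_zero_of_one_add_jordanJ_pow_eq hn <| by
    simpa [hP, hQ] using congrArg Units.val hts.symm
  have h2 : (2 : ZMod p) ≠ 0 := Ring.two_ne_zero <| by
    rw [ZMod.ringChar_zmod_n]; rintro rfl; exact absurd hodd (by decide)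
  obtain ⟨k, rfl⟩ := (ZMod.natCast_eq_zero_iff s p).mp ((mul_eq_zero.mp h2s).resolve_left h2)
  rw [pow_mul, hPp, one_pow]
end

section
/- Let n ≥ 3 be an integer, let J be the n×n integer matrix with J·e_i = e_{i+1} for 1 ≤ i < n and J·e_n = 0, and let P̂ = 1 + J and Q̂ = 1 + J + J², viewed as elements of GL_n(ℤ). Form the semidirect product G = W ⋊ GL_n(ℤ), where W is the additive group ℤ^n (written multiplicatively) and GL_n(ℤ) acts by matrix–vector multiplication. Let A be the subgroup of G generated by inl(e_1) and inr(P̂), and B the subgroup generated by inl(e_1) and inr(Q̂). Then A ⊓ B equals the image of inl (the embedded copy of W ≅ ℤ^n). -/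
open Matrix

/-- The natural action of `GL n R` on the (multiplicatively written) additive group
`Rⁿ` by matrix-vector multiplication, as a homomorphism to the automorphism group. -/
def glPhi (n : ℕ) (R : Type) [CommRing R] :
    GL (Fin n) R →* MulAut (Multiplicative (Fin n → R)) where
  toFun g :=
    { toFun := fun v => Multiplicative.ofAdd (g.val.mulVec v.toAdd)
      invFun := fun v => Multiplicative.ofAdd (g.inv.mulVec v.toAdd)
      left_inv := fun v => by
        simp [Matrix.mulVec_mulVec, g.inv_val, Matrix.one_mulVec]
      right_inv := fun v => by
        simp [Matrix.mulVec_mulVec, g.val_inv, Matrix.one_mulVec]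
      map_mul' := fun u v => by
        simp [Matrix.mulVec_add, ofAdd_add] }
  map_one' := by
    ext v
    simp [Matrix.one_mulVec]
  map_mul' g h := by
    ext v
    simp [Matrix.mulVec_mulVec]

open Polynomial

lemma jordan_pow_apply (n m : ℕ) (i j : Fin n) :
    (jordanJ n ℤ ^ m) i j = if (i : ℕ) = (j : ℕ) + m then 1 else 0 := by
  induction m generalizing i j with
  | zero =>
    simp [Matrix.one_apply, Fin.ext_iff]
  | succ m ih =>
    rw [pow_succ', Matrix.mul_apply]
    by_cases h : (i : ℕ) = (j : ℕ) + (m + 1)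
    · have hk : (j : ℕ) + m < n := by omega
      rw [Finset.sum_eq_single (⟨(j:ℕ)+m, hk⟩ : Fin n)]
      · rw [ih]; simp [jordanJ, h]; omega
      · intro b _ hb
        rw [ih]
        rcases eq_or_ne ((i:ℕ)) ((b:ℕ)+1) with h1 | h1
        · have : (b:ℕ) ≠ (j:ℕ) + m := fun hh => hb (by simp [Fin.ext_iff, hh])
          simp [jordanJ, h1]; omega
        · simp [jordanJ, h1]
      · simp
    · rw [if_neg h]
      apply Finset.sum_eq_zero
      intro b _
      rw [ih]
      rcases eq_or_ne ((i:ℕ)) ((b:ℕ)+1) with h1 | h1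
      · simp [jordanJ, h1]; omega
      · simp [jordanJ, h1]

lemma aeval_jordan_apply (n : ℕ) (p : Polynomial ℤ) (i j : Fin n) (h : (j : ℕ) ≤ i) :
    (Polynomial.aeval (jordanJ n ℤ) p) i j = p.coeff ((i : ℕ) - j) := by
  rw [Polynomial.aeval_eq_sum_range, Matrix.sum_apply]
  simp only [Matrix.smul_apply, jordan_pow_apply, smul_ite, smul_eq_mul, mul_one, mul_zero]
  have : ∀ m : ℕ, ((i:ℕ) = (j:ℕ) + m) = (m = (i:ℕ) - (j:ℕ)) := by
    intro m; apply propext; omega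
  simp only [this, mul_ite, mul_one, mul_zero]
  rw [Finset.sum_ite_eq' (Finset.range (p.natDegree + 1))]
  by_cases hd : (i:ℕ) - j ∈ Finset.range (p.natDegree + 1)
  · simp [hd]
  · rw [if_neg hd, Polynomial.coeff_eq_zero_of_natDegree_lt]
    simp at hd; omega

lemma coeff_q_pow (c : ℤ) (k : ℕ) :
    ((1 + X + C c * X ^ 2 : ℤ[X]) ^ k).coeff 0 = 1 ∧
    ((1 + X + C c * X ^ 2 : ℤ[X]) ^ k).coeff 1 = k ∧
    ((1 + X + C c * X ^ 2 : ℤ[X]) ^ k).coeff 2 = c * k + (k.choose 2 : ℤ) := by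
  induction k with
  | zero => refine ⟨by simp, by simp [Polynomial.coeff_one], by simp [Polynomial.coeff_one]⟩
  | succ k ih =>
    obtain ⟨h0, h1, h2⟩ := ih
    have hexp : ((1 + X + C c * X ^ 2 : ℤ[X]) ^ (k+1))
        = (1 + X + C c * X ^ 2) ^ k + (1 + X + C c * X ^ 2) ^ k * X ^ 1
          + C c * ((1 + X + C c * X ^ 2) ^ k * X ^ 2) := by ring
    rw [hexp]
    simp only [Polynomial.coeff_add, Polynomial.coeff_C_mul, Polynomial.coeff_mul_X_pow',
      show ¬ (1 ≤ 0) by omega, show ¬ (2 ≤ 0) by omega, show ¬ (2 ≤ 1) by omega,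
      if_neg, if_pos, le_refl, Nat.sub_self, show (1:ℕ) ≤ 2 by omega, show 2-1 = 1 by rfl,
      if_true, if_false, mul_zero, add_zero]
    rw [h0, h1, h2]
    refine ⟨rfl, by push_cast; ring, ?_⟩
    rw [Nat.choose_succ_succ k 1]
    push_cast [Nat.choose_one_right]
    ring

lemma coeff_p_pow (k : ℕ) :
    ((1 + X : ℤ[X]) ^ k).coeff 0 = 1 ∧
    ((1 + X : ℤ[X]) ^ k).coeff 1 = k ∧
    ((1 + X : ℤ[X]) ^ k).coeff 2 = (k.choose 2 : ℤ) := by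
  have := coeff_q_pow 0 k
  simpa using this

lemma coeff_qq_pow (k : ℕ) :
    ((1 + X + X ^ 2 : ℤ[X]) ^ k).coeff 0 = 1 ∧
    ((1 + X + X ^ 2 : ℤ[X]) ^ k).coeff 1 = k ∧
    ((1 + X + X ^ 2 : ℤ[X]) ^ k).coeff 2 = k + (k.choose 2 : ℤ) := by
  have := coeff_q_pow 1 k
  simpa using this

lemma aeval_p (n : ℕ) : Polynomial.aeval (jordanJ n ℤ) (1 + X : ℤ[X]) = 1 + jordanJ n ℤ := by
  simp

lemma aeval_q (n : ℕ) : Polynomial.aeval (jordanJ n ℤ) (1 + X + X ^ 2 : ℤ[X])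
    = 1 + jordanJ n ℤ + jordanJ n ℤ ^ 2 := by
  simp

lemma coeff_of_matrix_eq (n : ℕ) (hn : 3 ≤ n) (P Q : ℤ[X])
    (h : Polynomial.aeval (jordanJ n ℤ) P = Polynomial.aeval (jordanJ n ℤ) Q) :
    P.coeff 1 = Q.coeff 1 ∧ P.coeff 2 = Q.coeff 2 := by
  constructor
  · have := congrFun (congrFun h (⟨1, by omega⟩ : Fin n)) (⟨0, by omega⟩ : Fin n)
    rwa [aeval_jordan_apply n P _ _ (by simp), aeval_jordan_apply n Q _ _ (by simp)] at this
  · have := congrFun (congrFun h (⟨2, by omega⟩ : Fin n)) (⟨0, by omega⟩ : Fin n)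
    rwa [aeval_jordan_apply n P _ _ (by simp), aeval_jordan_apply n Q _ _ (by simp)] at this

lemma pq_nat_eq (n : ℕ) (hn : 3 ≤ n) (a b : ℕ)
    (h : (1 + jordanJ n ℤ) ^ a = (1 + jordanJ n ℤ + jordanJ n ℤ ^ 2) ^ b) :
    a = 0 ∧ b = 0 := by
  have h' : Polynomial.aeval (jordanJ n ℤ) ((1 + X : ℤ[X]) ^ a)
      = Polynomial.aeval (jordanJ n ℤ) ((1 + X + X ^ 2 : ℤ[X]) ^ b) := by
    rw [map_pow, map_pow, aeval_p, aeval_q, h]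
  obtain ⟨h1, h2⟩ := coeff_of_matrix_eq n hn _ _ h'
  obtain ⟨_, hp1, hp2⟩ := coeff_p_pow a
  obtain ⟨_, hq1, hq2⟩ := coeff_qq_pow b
  rw [hp1, hq1] at h1
  rw [hp2, hq2] at h2
  have hab : a = b := by exact_mod_cast h1
  subst hab
  have : (a : ℤ) = 0 := by linarith
  omega

lemma pq_nat_mul (n : ℕ) (hn : 3 ≤ n) (a b : ℕ)
    (h : (1 + jordanJ n ℤ) ^ a * (1 + jordanJ n ℤ + jordanJ n ℤ ^ 2) ^ b = 1) :
    a = 0 ∧ b = 0 := by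
  have h' : Polynomial.aeval (jordanJ n ℤ) ((1 + X : ℤ[X]) ^ a * (1 + X + X ^ 2 : ℤ[X]) ^ b)
      = Polynomial.aeval (jordanJ n ℤ) (1 : ℤ[X]) := by
    rw [_root_.map_mul, map_pow, map_pow, aeval_p, aeval_q, _root_.map_one, h]
  obtain ⟨h1, _⟩ := coeff_of_matrix_eq n hn _ _ h'
  obtain ⟨hp0, hp1, _⟩ := coeff_p_pow a
  obtain ⟨hq0, hq1, _⟩ := coeff_qq_pow b
  rw [Polynomial.coeff_mul,
    show Finset.HasAntidiagonal.antidiagonal (1:ℕ) = {(0,1),(1,0)} from rfl,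
    Finset.sum_pair (by decide)] at h1
  simp [hp0, hp1, hq0, hq1, Polynomial.coeff_one] at h1
  omega

def Lsub (n : ℕ)
    (H : Subgroup (Multiplicative (Fin n → ℤ) ⋊[glPhi n ℤ] GL (Fin n) ℤ)) :
    AddSubgroup (Fin n → ℤ) where
  carrier := {w | SemidirectProduct.inl (Multiplicative.ofAdd w) ∈ H}
  zero_mem' := by
    show SemidirectProduct.inl (Multiplicative.ofAdd 0) ∈ H
    simpa using H.one_mem
  add_mem' := by
    intro a b ha hb
    show SemidirectProduct.inl (Multiplicative.ofAdd (a + b)) ∈ H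
    rw [ofAdd_add, _root_.map_mul]
    exact H.mul_mem ha hb
  neg_mem' := by
    intro a ha
    show SemidirectProduct.inl (Multiplicative.ofAdd (-a)) ∈ H
    rw [ofAdd_neg, map_inv]
    exact H.inv_mem ha

lemma Lsub_mulVec (n : ℕ)
    (H : Subgroup (Multiplicative (Fin n → ℤ) ⋊[glPhi n ℤ] GL (Fin n) ℤ))
    (M : GL (Fin n) ℤ) (hM : SemidirectProduct.inr (φ := glPhi n ℤ) M ∈ H)
    (w : Fin n → ℤ) (hw : w ∈ Lsub n H) : M.val.mulVec w ∈ Lsub n H := by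
  show SemidirectProduct.inl (Multiplicative.ofAdd (M.val.mulVec w)) ∈ H
  have heq : (SemidirectProduct.inl (Multiplicative.ofAdd (M.val.mulVec w)) :
      Multiplicative (Fin n → ℤ) ⋊[glPhi n ℤ] GL (Fin n) ℤ)
      = SemidirectProduct.inl (glPhi n ℤ M (Multiplicative.ofAdd w)) := rfl
  rw [heq, SemidirectProduct.inl_aut, map_inv]
  exact H.mul_mem (H.mul_mem hM hw) (H.inv_mem hM)

lemma Lsub_sub_one_mulVec (n : ℕ)
    (H : Subgroup (Multiplicative (Fin n → ℤ) ⋊[glPhi n ℤ] GL (Fin n) ℤ))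
    (M : GL (Fin n) ℤ) (hM : SemidirectProduct.inr (φ := glPhi n ℤ) M ∈ H)
    (w : Fin n → ℤ) (hw : w ∈ Lsub n H) :
    (M.val - 1).mulVec w ∈ Lsub n H := by
  rw [Matrix.sub_mulVec, Matrix.one_mulVec]
  exact AddSubgroup.sub_mem _ (Lsub_mulVec n H M hM w hw) hw

lemma mem_of_singles (n : ℕ) (L : AddSubgroup (Fin n → ℤ))
    (h : ∀ j : Fin n, Pi.single j 1 ∈ L) (w : Fin n → ℤ) : w ∈ L := by
  rw [← Finset.univ_sum_single w]
  refine AddSubgroup.sum_mem _ fun i _ => ?_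
  rw [show w i = w i • (1 : ℤ) by simp, Pi.single_smul]
  exact AddSubgroup.zsmul_mem _ (h i) _

lemma singles_mem_of_J (n : ℕ) (hn : 0 < n) (L : AddSubgroup (Fin n → ℤ))
    (h0 : Pi.single (⟨0, hn⟩ : Fin n) 1 ∈ L)
    (hJ : ∀ w ∈ L, (jordanJ n ℤ).mulVec w ∈ L) :
    ∀ j : Fin n, Pi.single j 1 ∈ L := by
  have key : ∀ jn : ℕ, ∀ hj : jn < n, Pi.single (⟨jn, hj⟩ : Fin n) 1 ∈ L := by
    intro jn
    induction jn with
    | zero => intro hj; exact h0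
    | succ jn ih =>
      intro hj
      have h1 : jn < n := by omega
      have := hJ _ (ih h1)
      have heq : (jordanJ n ℤ).mulVec (Pi.single (⟨jn, h1⟩ : Fin n) 1)
          = Pi.single (⟨jn + 1, hj⟩ : Fin n) 1 := by
        rw [Matrix.mulVec_single]
        funext i
        simp [jordanJ, Pi.single_apply, Fin.ext_iff]
      rwa [heq] at this
  intro j
  have := key j.1 j.2
  simpa using this

lemma singles_mem_of_N (n : ℕ) (hn : 0 < n) (L : AddSubgroup (Fin n → ℤ))
    (h0 : Pi.single (⟨0, hn⟩ : Fin n) 1 ∈ L)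
    (hN : ∀ w ∈ L, (jordanJ n ℤ + jordanJ n ℤ ^ 2).mulVec w ∈ L) :
    ∀ j : Fin n, Pi.single j 1 ∈ L := by
  set N := jordanJ n ℤ + jordanJ n ℤ ^ 2 with hNdef
  have hNentry : ∀ i j : Fin n, N i j =
      if (i : ℕ) = (j : ℕ) + 1 ∨ (i : ℕ) = (j : ℕ) + 2 then 1 else 0 := by
    intro i j
    have : N i j = (jordanJ n ℤ) i j + (jordanJ n ℤ ^ 2) i j := rfl
    rw [this, show (jordanJ n ℤ) i j = (jordanJ n ℤ ^ 1) i j by rw [pow_one],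
      jordan_pow_apply, jordan_pow_apply]
    by_cases h1 : (i : ℕ) = (j : ℕ) + 1 <;> by_cases h2 : (i : ℕ) = (j : ℕ) + 2 <;>
      simp [h1, h2] <;> omega
  set v : ℕ → (Fin n → ℤ) := fun k => (fun w => N.mulVec w)^[k] (Pi.single (⟨0, hn⟩ : Fin n) 1)
    with hvdef
  have hvsucc : ∀ k, v (k + 1) = N.mulVec (v k) := by
    intro k
    rw [hvdef]
    simp [Function.iterate_succ_apply']
  have hvL : ∀ k, v k ∈ L := by
    intro k
    induction k with
    | zero => exact h0
    | succ k ih => rw [hvsucc]; exact hN _ ih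
  have hv0 : ∀ k, (∀ i : Fin n, (i : ℕ) < k → v k i = 0) ∧
      (∀ i : Fin n, (i : ℕ) = k → v k i = 1) := by
    intro k
    induction k with
    | zero =>
      constructor
      · intro i hi; omega
      · intro i hi
        have : i = ⟨0, hn⟩ := by exact Fin.ext hi
        rw [this]; simp [v]
    | succ k ih =>
      obtain ⟨ih0, ih1⟩ := ih
      constructor
      · intro i hi
        rw [hvsucc, Matrix.mulVec, dotProduct]
        apply Finset.sum_eq_zero
        intro j _
        by_cases hj : (i : ℕ) = (j : ℕ) + 1 ∨ (i : ℕ) = (j : ℕ) + 2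
        · rw [ih0 j (by omega), mul_zero]
        · rw [hNentry, if_neg hj, zero_mul]
      · intro i hi
        rw [hvsucc, Matrix.mulVec, dotProduct]
        have hk : k < n := by omega
        rw [Finset.sum_eq_single (⟨k, hk⟩ : Fin n)]
        · rw [hNentry, ih1 _ rfl, if_pos (by simp; omega), one_mul]
        · intro j _ hj
          by_cases hcase : (i : ℕ) = (j : ℕ) + 1 ∨ (i : ℕ) = (j : ℕ) + 2
          · have hjk : (j : ℕ) ≠ k := fun hh => hj (Fin.ext hh)
            rw [ih0 j (by omega), mul_zero]
          · rw [hNentry, if_neg hcase, zero_mul]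
        · simp
  have key : ∀ d : ℕ, ∀ j : Fin n, n ≤ (j : ℕ) + 1 + d → Pi.single j 1 ∈ L := by
    intro d
    induction d with
    | zero =>
      intro j hj
      have hj' : (j : ℕ) = n - 1 := by omega
      have : v (n - 1) = Pi.single j 1 := by
        funext i
        rcases lt_trichotomy (i : ℕ) (n - 1) with h | h | h
        · rw [(hv0 (n-1)).1 i h, Pi.single_apply, if_neg (by
            intro hh; rw [hh] at h; omega)]
        · rw [(hv0 (n-1)).2 i h, Pi.single_apply,
            if_pos (Fin.ext (by omega))]
        · exact absurd i.2 (by omega)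
      rw [← this]; exact hvL _
    | succ d ih =>
      intro j hj
      by_cases hcase : n ≤ (j : ℕ) + 1 + d
      · exact ih j hcase
      have hjn : (j : ℕ) + 2 + d = n := by omega
      obtain ⟨w, hw⟩ : ∃ w, w = v (j : ℕ) := ⟨_, rfl⟩
      have hw0 : ∀ i : Fin n, (i : ℕ) < (j : ℕ) → w i = 0 := by
        rw [hw]; exact fun i hi => (hv0 _).1 i hi
      have hwj : w j = 1 := by rw [hw]; exact (hv0 _).2 j rfl
      have hwL : w ∈ L := by rw [hw]; exact hvL _
      have hsum : ∑ i ∈ Finset.univ.erase j, Pi.single i (w i) + Pi.single j (w j) = w := by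
        rw [Finset.sum_erase_add _ _ (Finset.mem_univ j), Finset.univ_sum_single]
      have hmem : Pi.single j (w j) ∈ L := by
        have heq2 : Pi.single j (w j) = w - ∑ i ∈ Finset.univ.erase j, Pi.single i (w i) := by
          exact eq_sub_of_add_eq' hsum
        rw [heq2]
        refine AddSubgroup.sub_mem _ hwL (AddSubgroup.sum_mem _ fun i hi => ?_)
        have hij : i ≠ j := Finset.ne_of_mem_erase hi
        rcases lt_trichotomy ((i : ℕ)) ((j : ℕ)) with h | h | h
        · rw [hw0 i h, Pi.single_zero]; exact L.zero_mem
        · exact absurd (Fin.ext h) hij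
        · rw [show w i = w i • (1 : ℤ) by simp, Pi.single_smul]
          exact AddSubgroup.zsmul_mem _ (ih i (by omega)) _
      rwa [hwj] at hmem
  intro j
  exact key n j (by omega)

lemma pq_zpow (n : ℕ) (hn : 3 ≤ n) (Phat Qhat : GL (Fin n) ℤ)
    (hP : (Phat : Matrix (Fin n) (Fin n) ℤ) = 1 + jordanJ n ℤ)
    (hQ : (Qhat : Matrix (Fin n) (Fin n) ℤ) = 1 + jordanJ n ℤ + jordanJ n ℤ ^ 2)
    (k m : ℤ) (h : Phat ^ k = Qhat ^ m) : k = 0 := by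
  rcases le_or_gt 0 k with hk | hk <;> rcases le_or_gt 0 m with hm | hm
  · -- both nonneg
    lift k to ℕ using hk
    lift m to ℕ using hm
    rw [zpow_natCast, zpow_natCast] at h
    have hv := congrArg Units.val h
    rw [Units.val_pow_eq_pow_val, Units.val_pow_eq_pow_val, hP, hQ] at hv
    have := pq_nat_eq n hn k m hv
    omega
  · -- k ≥ 0, m < 0
    lift k to ℕ using hk
    obtain ⟨b, hb⟩ : ∃ b : ℕ, m = -(b : ℤ) := ⟨(-m).toNat, by omega⟩
    subst hb
    rw [zpow_natCast, _root_.zpow_neg, zpow_natCast] at h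
    have h2 : Phat ^ k * Qhat ^ b = 1 := by rw [h, inv_mul_cancel]
    have hv := congrArg Units.val h2
    rw [Units.val_mul, Units.val_pow_eq_pow_val, Units.val_pow_eq_pow_val, hP, hQ,
      Units.val_one] at hv
    have := pq_nat_mul n hn k b hv
    omega
  · -- k < 0, m ≥ 0
    lift m to ℕ using hm
    obtain ⟨a, ha⟩ : ∃ a : ℕ, k = -(a : ℤ) := ⟨(-k).toNat, by omega⟩
    subst ha
    rw [zpow_natCast, _root_.zpow_neg, zpow_natCast] at h
    have h2 : Phat ^ a * Qhat ^ m = 1 := by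
      rw [← h, mul_inv_cancel]
    have hv := congrArg Units.val h2
    rw [Units.val_mul, Units.val_pow_eq_pow_val, Units.val_pow_eq_pow_val, hP, hQ,
      Units.val_one] at hv
    have := pq_nat_mul n hn a m hv
    omega
  · -- both neg
    obtain ⟨a, ha⟩ : ∃ a : ℕ, k = -(a : ℤ) := ⟨(-k).toNat, by omega⟩
    obtain ⟨b, hb⟩ : ∃ b : ℕ, m = -(b : ℤ) := ⟨(-m).toNat, by omega⟩
    subst ha; subst hb
    rw [_root_.zpow_neg, _root_.zpow_neg, zpow_natCast, zpow_natCast, _root_.inv_inj] at h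
    have hv := congrArg Units.val h
    rw [Units.val_pow_eq_pow_val, Units.val_pow_eq_pow_val, hP, hQ] at hv
    have := pq_nat_eq n hn a b hv
    omega

lemma rightHom_mem_zpowers (n : ℕ) (w : Multiplicative (Fin n → ℤ)) (R : GL (Fin n) ℤ)
    (g : Multiplicative (Fin n → ℤ) ⋊[glPhi n ℤ] GL (Fin n) ℤ)
    (hg : g ∈ Subgroup.closure
      {SemidirectProduct.inl w, SemidirectProduct.inr (φ := glPhi n ℤ) R}) :
    SemidirectProduct.rightHom g ∈ Subgroup.zpowers R := by
  have hmap : SemidirectProduct.rightHom g ∈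
      Subgroup.map SemidirectProduct.rightHom (Subgroup.closure
        {SemidirectProduct.inl w, SemidirectProduct.inr (φ := glPhi n ℤ) R}) :=
    Subgroup.mem_map_of_mem _ hg
  rw [MonoidHom.map_closure] at hmap
  refine (Subgroup.closure_le _).2 ?_ hmap
  rw [Set.image_pair]
  intro x hx
  rcases Set.mem_insert_iff.1 hx with hx | hx
  · rw [hx, SemidirectProduct.rightHom_inl]
    exact Subgroup.one_mem _
  · rw [Set.mem_singleton_iff.1 hx, SemidirectProduct.rightHom_inr]
    exact Subgroup.mem_zpowers R

/-- In the semidirect product `W ⋊ GL n ℤ` (with `W = ℤⁿ`), the subgroups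
`A = ⟨inl e₁, inr P̂⟩` and `B = ⟨inl e₁, inr Q̂⟩`, where `P̂ = 1 + J` and
`Q̂ = 1 + J + J²`, intersect exactly in the embedded copy of `W`. -/
theorem integer_inf_eq_inl_range (n : ℕ) (hn : 3 ≤ n) (Phat Qhat : GL (Fin n) ℤ)
    (hP : (Phat : Matrix (Fin n) (Fin n) ℤ) = 1 + jordanJ n ℤ)
    (hQ : (Qhat : Matrix (Fin n) (Fin n) ℤ) = 1 + jordanJ n ℤ + jordanJ n ℤ ^ 2) :
    Subgroup.closure
        {SemidirectProduct.inl
            (Multiplicative.ofAdd (Pi.single (⟨0, by omega⟩ : Fin n) 1)),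
          SemidirectProduct.inr (φ := glPhi n ℤ) Phat} ⊓
      Subgroup.closure
        {SemidirectProduct.inl
            (Multiplicative.ofAdd (Pi.single (⟨0, by omega⟩ : Fin n) 1)),
          SemidirectProduct.inr (φ := glPhi n ℤ) Qhat} =
    (SemidirectProduct.inl :
      Multiplicative (Fin n → ℤ) →* Multiplicative (Fin n → ℤ) ⋊[glPhi n ℤ]
        GL (Fin n) ℤ).range := by
  apply le_antisymm
  · rintro g ⟨hgA, hgB⟩
    rw [SemidirectProduct.range_inl_eq_ker_rightHom, MonoidHom.mem_ker]
    obtain ⟨k, hk⟩ := Subgroup.mem_zpowers_iff.1 (rightHom_mem_zpowers n _ Phat g hgA)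
    obtain ⟨m, hm⟩ := Subgroup.mem_zpowers_iff.1 (rightHom_mem_zpowers n _ Qhat g hgB)
    have hk0 : k = 0 := pq_zpow n hn Phat Qhat hP hQ k m (hk.trans hm.symm)
    rw [← hk, hk0, zpow_zero]
  · rintro g ⟨w, rfl⟩
    rw [Subgroup.mem_inf]
    constructor
    · have hMr : SemidirectProduct.inr (φ := glPhi n ℤ) Phat ∈ Subgroup.closure
          {SemidirectProduct.inl
            (Multiplicative.ofAdd (Pi.single (⟨0, by omega⟩ : Fin n) 1)),
          SemidirectProduct.inr (φ := glPhi n ℤ) Phat} :=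
        Subgroup.subset_closure (Set.mem_insert_of_mem _ rfl)
      have h0 : Pi.single (⟨0, by omega⟩ : Fin n) 1 ∈ Lsub n (Subgroup.closure
          {SemidirectProduct.inl
            (Multiplicative.ofAdd (Pi.single (⟨0, by omega⟩ : Fin n) 1)),
          SemidirectProduct.inr (φ := glPhi n ℤ) Phat}) :=
        Subgroup.subset_closure (Set.mem_insert _ _)
      have hstep : ∀ u ∈ Lsub n (Subgroup.closure
          {SemidirectProduct.inl
            (Multiplicative.ofAdd (Pi.single (⟨0, by omega⟩ : Fin n) 1)),
          SemidirectProduct.inr (φ := glPhi n ℤ) Phat}),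
          (jordanJ n ℤ).mulVec u ∈ Lsub n (Subgroup.closure
          {SemidirectProduct.inl
            (Multiplicative.ofAdd (Pi.single (⟨0, by omega⟩ : Fin n) 1)),
          SemidirectProduct.inr (φ := glPhi n ℤ) Phat}) := by
        intro u hu
        have h2 := Lsub_sub_one_mulVec n _ Phat hMr u hu
        rwa [show (Phat : Matrix (Fin n) (Fin n) ℤ) - 1 = jordanJ n ℤ by
          rw [hP]; abel] at h2
      have hsingles := singles_mem_of_J n (by omega) _ h0 hstep
      exact mem_of_singles n _ hsingles (Multiplicative.toAdd w)
    · have hMr : SemidirectProduct.inr (φ := glPhi n ℤ) Qhat ∈ Subgroup.closure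
          {SemidirectProduct.inl
            (Multiplicative.ofAdd (Pi.single (⟨0, by omega⟩ : Fin n) 1)),
          SemidirectProduct.inr (φ := glPhi n ℤ) Qhat} :=
        Subgroup.subset_closure (Set.mem_insert_of_mem _ rfl)
      have h0 : Pi.single (⟨0, by omega⟩ : Fin n) 1 ∈ Lsub n (Subgroup.closure
          {SemidirectProduct.inl
            (Multiplicative.ofAdd (Pi.single (⟨0, by omega⟩ : Fin n) 1)),
          SemidirectProduct.inr (φ := glPhi n ℤ) Qhat}) :=
        Subgroup.subset_closure (Set.mem_insert _ _)
      have hstep : ∀ u ∈ Lsub n (Subgroup.closure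
          {SemidirectProduct.inl
            (Multiplicative.ofAdd (Pi.single (⟨0, by omega⟩ : Fin n) 1)),
          SemidirectProduct.inr (φ := glPhi n ℤ) Qhat}),
          (jordanJ n ℤ + jordanJ n ℤ ^ 2).mulVec u ∈ Lsub n (Subgroup.closure
          {SemidirectProduct.inl
            (Multiplicative.ofAdd (Pi.single (⟨0, by omega⟩ : Fin n) 1)),
          SemidirectProduct.inr (φ := glPhi n ℤ) Qhat}) := by
        intro u hu
        have h2 := Lsub_sub_one_mulVec n _ Qhat hMr u hu
        rwa [show (Qhat : Matrix (Fin n) (Fin n) ℤ) - 1 = jordanJ n ℤ + jordanJ n ℤ ^ 2 by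
          rw [hQ]; abel] at h2
      have hsingles := singles_mem_of_N n (by omega) _ h0 hstep
      exact mem_of_singles n _ hsingles (Multiplicative.toAdd w)
end
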